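/- The diameter function is Lipschitz for quantum Gromov–Hausdorff distance: for all compact quantum metric spaces (A,L_A) and (B,L_B), |diam(A,L_A) − diam(B,L_B)| ≤ 2·dist_q(A,B). -/

import Mathlib

open scoped ENNReal

/-- An order-unit space in the sense of Kadison: a partially ordered real vector
space with a positive order unit `e` satisfying the order-unit property and the
Archimedean property. -/
structure OrderUnitSpace : Type 1 where
  carrier : Type
  [toAddCommGroup : AddCommGroup carrier]
  [toModule : Module ℝ carrier]
  [toPartialOrder : PartialOrder carrier]
  add_le_add_left' : ∀ a b : carrier, a ≤ b → ∀ c : carrier, c + a ≤ c + b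
  smul_nonneg' : ∀ (r : ℝ) (a : carrier), 0 ≤ r → 0 ≤ a → 0 ≤ r • a
  e : carrier
  e_nonneg : 0 ≤ e
  orderUnit : ∀ a : carrier, ∃ r : ℝ, a ≤ r • e
  arch : ∀ a : carrier, (∀ r : ℝ, 0 < r → a ≤ r • e) → a ≤ 0

attribute [instance] OrderUnitSpace.toAddCommGroup OrderUnitSpace.toModule
  OrderUnitSpace.toPartialOrder

/-- The topology generated by the open balls of a distance function. -/
def ballTopology {S : Type*} (ρ : S → S → ℝ≥0∞) : TopologicalSpace S :=
  TopologicalSpace.generateFrom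
    {U : Set S | ∃ (μ : S) (ε : ℝ≥0∞), 0 < ε ∧ U = {ν | ρ μ ν < ε}}

/-- The quotient seminorm of `L` along the surjection `π`. -/
noncomputable def quotientSeminorm {α β : Type*} (π : α → β) (L : α → ℝ) (b : β) : ℝ :=
  sInf {r : ℝ | ∃ a, π a = b ∧ L a = r}

/-- `L` induces `LB` via `π`, i.e. `LB` is the quotient seminorm of `L` for `π`. -/
def Induces {α β : Type*} (π : α → β) (L : α → ℝ) (LB : β → ℝ) : Prop :=
  ∀ b, LB b = quotientSeminorm π L b

/-- Hausdorff distance between two subsets with respect to a distance function. -/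
noncomputable def hausdorffDistWith {S : Type*} (ρ : S → S → ℝ≥0∞) (T U : Set S) : ℝ≥0∞ :=
  max (⨆ t ∈ T, ⨅ u ∈ U, ρ t u) (⨆ u ∈ U, ⨅ t ∈ T, ρ t u)

namespace OrderUnitSpace

variable (A B : OrderUnitSpace)

theorem le_of_sub_nonneg'' {x y : A.carrier} (h : 0 ≤ y - x) : x ≤ y := by
  have h2 := A.add_le_add_left' 0 (y - x) h x
  have h3 : x + (y - x) = y := by abel
  rw [add_zero, h3] at h2
  exact h2

theorem smul_e_mono {r s : ℝ} (h : r ≤ s) : r • A.e ≤ s • A.e := by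
  apply A.le_of_sub_nonneg''
  have h3 : s • A.e - r • A.e = (s - r) • A.e := by rw [sub_smul]
  rw [h3]
  exact A.smul_nonneg' _ _ (by linarith) A.e_nonneg

/-- The order-unit norm. -/
noncomputable def onorm (a : A.carrier) : ℝ :=
  sInf {r : ℝ | -(r • A.e) ≤ a ∧ a ≤ r • A.e}

/-- A state: a unital positive linear functional. -/
def IsState (μ : A.carrier →ₗ[ℝ] ℝ) : Prop :=
  μ A.e = 1 ∧ ∀ a : A.carrier, 0 ≤ a → 0 ≤ μ a

/-- The state space. -/
def State : Type := {μ : A.carrier →ₗ[ℝ] ℝ // A.IsState μ}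

/-- The weak-* topology on the state space. -/
instance : TopologicalSpace A.State :=
  TopologicalSpace.induced (fun μ : A.State => (μ.1 : A.carrier → ℝ)) Pi.topologicalSpace

/-- The metric `ρ_L` on the state space defined by a seminorm `L`. -/
noncomputable def rho (L : Seminorm ℝ A.carrier) (μ ν : A.State) : ℝ≥0∞ :=
  ⨆ a : {a : A.carrier // L a ≤ 1}, ENNReal.ofReal |μ.1 a.1 - ν.1 a.1|

/-- A Lipschitz seminorm: its null space is exactly `ℝ e`. -/
def IsLipschitz (L : Seminorm ℝ A.carrier) : Prop :=
  ∀ a : A.carrier, L a = 0 ↔ ∃ t : ℝ, a = t • A.e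

/-- A Lip-norm: a Lipschitz seminorm whose metric `ρ_L` induces the weak-* topology. -/
def IsLipNorm (L : Seminorm ℝ A.carrier) : Prop :=
  A.IsLipschitz L ∧ ballTopology (A.rho L) = (inferInstance : TopologicalSpace A.State)

/-- The diameter of the state space for `ρ_L`. -/
noncomputable def diam (L : Seminorm ℝ A.carrier) : ℝ≥0∞ :=
  ⨆ (μ : A.State) (ν : A.State), A.rho L μ ν

/-- The radius: half the diameter. -/
noncomputable def radius (L : Seminorm ℝ A.carrier) : ℝ≥0∞ := A.diam L / 2

/-- Morphism of order-unit spaces: a unital positive linear map. -/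
def IsMorphism (f : A.carrier →ₗ[ℝ] B.carrier) : Prop :=
  f A.e = B.e ∧ ∀ a : A.carrier, 0 ≤ a → 0 ≤ f a

/-- Pull back a state along a morphism; this is `S(π)`. -/
noncomputable def pullState (f : A.carrier →ₗ[ℝ] B.carrier) (hf : A.IsMorphism B f)
    (μ : B.State) : A.State :=
  ⟨(μ.1).comp f, by
    constructor
    · rw [LinearMap.comp_apply, hf.1]; exact μ.2.1
    · intro a ha; exact μ.2.2 _ (hf.2 a ha)⟩

/-- The direct sum `A ⊕ B` as an order-unit space. -/
@[reducible] def prod : OrderUnitSpace where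
  carrier := A.carrier × B.carrier
  add_le_add_left' := by
    intro a b hab c
    rw [Prod.le_def] at hab ⊢
    exact ⟨A.add_le_add_left' _ _ hab.1 _, B.add_le_add_left' _ _ hab.2 _⟩
  smul_nonneg' := by
    intro r a hr ha
    rw [Prod.le_def] at ha ⊢
    exact ⟨A.smul_nonneg' r a.1 hr ha.1, B.smul_nonneg' r a.2 hr ha.2⟩
  e := (A.e, B.e)
  e_nonneg := by
    rw [Prod.le_def]
    exact ⟨A.e_nonneg, B.e_nonneg⟩
  orderUnit := by
    intro a
    obtain ⟨r₁, h1⟩ := A.orderUnit a.1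
    obtain ⟨r₂, h2⟩ := B.orderUnit a.2
    refine ⟨max r₁ r₂, ?_⟩
    rw [Prod.le_def]
    exact ⟨le_trans h1 (A.smul_e_mono (le_max_left _ _)),
      le_trans h2 (B.smul_e_mono (le_max_right _ _))⟩
  arch := by
    intro a h
    rw [Prod.le_def]
    exact ⟨A.arch a.1 fun r hr => ((Prod.le_def.mp (h r hr)).1),
      B.arch a.2 fun r hr => ((Prod.le_def.mp (h r hr)).2)⟩

/-- The embedding of `S(A)` into `S(A ⊕ B)` dual to the first coordinate projection. -/
noncomputable def leftState (μ : A.State) : (A.prod B).State :=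
  ⟨(μ.1).comp (LinearMap.fst ℝ A.carrier B.carrier), by
    constructor
    · exact μ.2.1
    · intro p hp; exact μ.2.2 p.1 hp.1⟩

/-- The embedding of `S(B)` into `S(A ⊕ B)` dual to the second coordinate projection. -/
noncomputable def rightState (ν : B.State) : (A.prod B).State :=
  ⟨(ν.1).comp (LinearMap.snd ℝ A.carrier B.carrier), by
    constructor
    · exact ν.2.1
    · intro p hp; exact ν.2.2 p.2 hp.2⟩

/-- The set `M(L_A, L_B)` of Lip-norms on `A ⊕ B` inducing `L_A` and `L_B`
via the coordinate projections. -/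
def admissible (LA : Seminorm ℝ A.carrier) (LB : Seminorm ℝ B.carrier) :
    Set (Seminorm ℝ (A.prod B).carrier) :=
  {L | (A.prod B).IsLipNorm L ∧
    Induces (Prod.fst : A.carrier × B.carrier → A.carrier) (fun p => L p) (fun a => LA a) ∧
    Induces (Prod.snd : A.carrier × B.carrier → B.carrier) (fun p => L p) (fun b => LB b)}

/-- Quantum Gromov–Hausdorff distance. -/
noncomputable def distq (LA : Seminorm ℝ A.carrier) (LB : Seminorm ℝ B.carrier) : ℝ≥0∞ :=
  ⨅ L ∈ A.admissible B LA LB,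
    hausdorffDistWith ((A.prod B).rho L) (Set.range (A.leftState B)) (Set.range (A.rightState B))

end OrderUnitSpace

/-! For every admissible `L`, the duals of the coordinate projections embed `S(A)` and `S(B)`
isometrically into `(S(A ⊕ B), ρ_L)`: since `L` induces `L_A`, each element of the `L_A`-unit ball
lifts, after scaling by any `r < 1`, into the `L`-unit ball. In any (pseudo)metric space the
diameters of two subsets differ by at most twice their Hausdorff distance (route every pair of
points of one subset through nearby points of the other), and taking the infimum over `L` gives
the bound with `dist_q`. -/

section Metric

variable {S : Type*} (ρ : S → S → ℝ≥0∞)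

noncomputable def diamWith (T : Set S) : ℝ≥0∞ :=
  ⨆ t ∈ T, ⨆ t' ∈ T, ρ t t'

theorem diamWith_range {ι : Type*} (f : ι → S) :
    diamWith ρ (Set.range f) = ⨆ (i : ι) (j : ι), ρ (f i) (f j) := by
  simp only [diamWith, iSup_range]

theorem hausdorffDistWith_comm (hρ : ∀ x y, ρ x y = ρ y x) (T U : Set S) :
    hausdorffDistWith ρ T U = hausdorffDistWith ρ U T := by
  simp only [hausdorffDistWith, hρ _ _]
  exact max_comm _ _

theorem diamWith_le_diamWith_add_two_mul_hausdorffDistWith (hρ : ∀ x y, ρ x y = ρ y x)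
    (htri : ∀ x y z, ρ x z ≤ ρ x y + ρ y z) (T U : Set S) :
    diamWith ρ T ≤ diamWith ρ U + 2 * hausdorffDistWith ρ T U := by
  refine iSup₂_le fun t ht => iSup₂_le fun t' ht' => ?_
  have hclose : ∀ s ∈ T, ⨅ u ∈ U, ρ s u ≤ hausdorffDistWith ρ T U := fun s hs =>
    (le_iSup₂_of_le (f := fun s _ => ⨅ u ∈ U, ρ s u) s hs le_rfl).trans (le_max_left _ _)
  have hroute : ∀ u ∈ U, ∀ u' ∈ U, ρ t t' ≤ ρ t u + (diamWith ρ U + ρ t' u') := by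
    intro u hu u' hu'
    calc ρ t t' ≤ ρ t u + (ρ u u' + ρ u' t') :=
          (htri _ _ _).trans (add_le_add_right (htri _ _ _) _)
      _ ≤ ρ t u + (diamWith ρ U + ρ t' u') := by
          rw [hρ u' t']
          gcongr
          exact le_iSup₂_of_le u hu (le_iSup₂_of_le u' hu' le_rfl)
  calc ρ t t' ≤ (⨅ u ∈ U, ρ t u) + (diamWith ρ U + ⨅ u' ∈ U, ρ t' u') := by
        simp only [ENNReal.add_iInf, ENNReal.iInf_add]
        exact le_iInf₂ fun u' hu' => le_iInf₂ fun u hu => hroute u hu u' hu'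
    _ ≤ hausdorffDistWith ρ T U + (diamWith ρ U + hausdorffDistWith ρ T U) := by
        gcongr
        exacts [hclose t ht, hclose t' ht']
    _ = diamWith ρ U + 2 * hausdorffDistWith ρ T U := by ring

end Metric

theorem ENNReal.le_add_mul_biInf {ι : Type*} {s : Set ι} {f : ι → ℝ≥0∞} {x y c : ℝ≥0∞}
    (hc₀ : c ≠ 0) (hc : c ≠ ⊤) (h : ∀ i ∈ s, x ≤ y + c * f i) :
    x ≤ y + c * ⨅ i ∈ s, f i := by
  simp only [ENNReal.mul_iInf_of_ne hc₀ hc, ENNReal.add_iInf]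
  exact le_iInf₂ h

section Quotient

variable {α β : Type*} {π : α → β} {L : α → ℝ}

theorem quotientSeminorm_apply_le (hL : ∀ a, 0 ≤ L a) (a : α) :
    quotientSeminorm π L (π a) ≤ L a := by
  refine csInf_le ?_ ⟨a, rfl, rfl⟩
  exact ⟨0, by rintro _ ⟨a, -, rfl⟩; exact hL a⟩

theorem exists_apply_lt_of_quotientSeminorm_lt (hπ : Function.Surjective π) {b : β} {c : ℝ}
    (h : quotientSeminorm π L b < c) : ∃ a, π a = b ∧ L a < c := by
  obtain ⟨a, rfl⟩ := hπ b
  obtain ⟨_, ⟨a', ha', rfl⟩, hlt⟩ := exists_lt_of_csInf_lt (by exact ⟨L a, a, rfl, rfl⟩) h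
  exact ⟨a', ha', hlt⟩

end Quotient

theorem iSup_ofReal_abs_comp_eq_of_induces {X Y : Type*} [AddCommGroup X] [Module ℝ X]
    [AddCommGroup Y] [Module ℝ Y] (π : X →ₗ[ℝ] Y) (hπ : Function.Surjective π)
    {L : Seminorm ℝ X} {LY : Seminorm ℝ Y} (h : Induces π (fun a => L a) (fun b => LY b))
    (φ : Y →ₗ[ℝ] ℝ) :
    ⨆ a : {a : X // L a ≤ 1}, ENNReal.ofReal |φ (π a)| =
      ⨆ b : {b : Y // LY b ≤ 1}, ENNReal.ofReal |φ b| := by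
  apply le_antisymm
  · refine iSup_le fun a => le_iSup_of_le ⟨π a, ?_⟩ le_rfl
    exact (h _).trans_le ((quotientSeminorm_apply_le (apply_nonneg L) _).trans a.2)
  · refine iSup_le fun b => ENNReal.le_of_forall_lt_one_mul_le fun t ht => ?_
    lift t to NNReal using ht.ne_top
    obtain rfl | ht₀ := eq_zero_or_pos t
    · simp
    set r : ℝ := (t : ℝ)
    have hr₀ : 0 < r := ht₀
    have hr₁ : r < 1 := by exact_mod_cast ht
    obtain ⟨a, hab, ha⟩ := exists_apply_lt_of_quotientSeminorm_lt hπ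
      (((h b).symm.trans_le b.2).trans_lt (one_lt_inv₀ hr₀ |>.mpr hr₁))
    have hra : L (r • a) ≤ 1 := by
      rw [map_smul_eq_mul, Real.norm_of_nonneg hr₀.le]
      calc r * L a ≤ r * r⁻¹ := by gcongr
        _ = 1 := mul_inv_cancel₀ hr₀.ne'
    calc (t : ℝ≥0∞) * ENNReal.ofReal |φ b| = ENNReal.ofReal |φ (π (r • a))| := by
          rw [map_smul, map_smul, hab, smul_eq_mul, abs_mul, abs_of_pos hr₀,
            ENNReal.ofReal_mul hr₀.le, ENNReal.ofReal_coe_nnreal]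
      _ ≤ _ := le_iSup_of_le ⟨r • a, hra⟩ le_rfl

namespace OrderUnitSpace

variable {A B : OrderUnitSpace}

theorem rho_comm (L : Seminorm ℝ A.carrier) (μ ν : A.State) : A.rho L μ ν = A.rho L ν μ := by
  simp only [rho, abs_sub_comm]

theorem rho_triangle (L : Seminorm ℝ A.carrier) (μ κ ν : A.State) :
    A.rho L μ ν ≤ A.rho L μ κ + A.rho L κ ν := by
  refine iSup_le fun a => ?_
  calc ENNReal.ofReal |μ.1 a.1 - ν.1 a.1|
      ≤ ENNReal.ofReal |μ.1 a.1 - κ.1 a.1| + ENNReal.ofReal |κ.1 a.1 - ν.1 a.1| := by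
        rw [← ENNReal.ofReal_add (abs_nonneg _) (abs_nonneg _)]
        exact ENNReal.ofReal_le_ofReal (abs_sub_le _ _ _)
    _ ≤ A.rho L μ κ + A.rho L κ ν :=
        add_le_add (le_iSup_of_le a le_rfl) (le_iSup_of_le a le_rfl)

variable {LA : Seminorm ℝ A.carrier} {LB : Seminorm ℝ B.carrier}
  {L : Seminorm ℝ (A.prod B).carrier}

theorem rho_leftState (hL : Induces (Prod.fst : A.carrier × B.carrier → A.carrier)
    (fun p => L p) (fun a => LA a)) (μ ν : A.State) :
    (A.prod B).rho L (A.leftState B μ) (A.leftState B ν) = A.rho LA μ ν :=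
  iSup_ofReal_abs_comp_eq_of_induces (LinearMap.fst ℝ A.carrier B.carrier) Prod.fst_surjective
    hL (μ.1 - ν.1)

theorem rho_rightState (hL : Induces (Prod.snd : A.carrier × B.carrier → B.carrier)
    (fun p => L p) (fun b => LB b)) (μ ν : B.State) :
    (A.prod B).rho L (A.rightState B μ) (A.rightState B ν) = B.rho LB μ ν :=
  iSup_ofReal_abs_comp_eq_of_induces (LinearMap.snd ℝ A.carrier B.carrier) Prod.snd_surjective
    hL (μ.1 - ν.1)

theorem diam_le_diam_add_two_mul_hausdorffDistWith (hL : L ∈ A.admissible B LA LB) :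
    let H := hausdorffDistWith ((A.prod B).rho L)
      (Set.range (A.leftState B)) (Set.range (A.rightState B))
    A.diam LA ≤ B.diam LB + 2 * H ∧ B.diam LB ≤ A.diam LA + 2 * H := by
  obtain ⟨-, hA, hB⟩ := hL
  have hdiamA : A.diam LA = diamWith ((A.prod B).rho L) (Set.range (A.leftState B)) := by
    rw [diamWith_range, diam]
    simp only [rho_leftState hA]
  have hdiamB : B.diam LB = diamWith ((A.prod B).rho L) (Set.range (A.rightState B)) := by
    rw [diamWith_range, diam]
    simp only [rho_rightState hB]
  have key := diamWith_le_diamWith_add_two_mul_hausdorffDistWith _ (rho_comm L) (rho_triangle L)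
  rw [hdiamA, hdiamB]
  refine ⟨key _ _, ?_⟩
  rw [hausdorffDistWith_comm _ (rho_comm L)]
  exact key _ _

end OrderUnitSpace

theorem abs_diam_sub_diam_le_two_distq_general (A B : OrderUnitSpace)
    (LA : Seminorm ℝ A.carrier) (LB : Seminorm ℝ B.carrier) :
    A.diam LA ≤ B.diam LB + 2 * A.distq B LA LB ∧
      B.diam LB ≤ A.diam LA + 2 * A.distq B LA LB :=
  ⟨ENNReal.le_add_mul_biInf two_ne_zero ENNReal.ofNat_ne_top fun _ hL =>
      (OrderUnitSpace.diam_le_diam_add_two_mul_hausdorffDistWith hL).1,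
    ENNReal.le_add_mul_biInf two_ne_zero ENNReal.ofNat_ne_top fun _ hL =>
      (OrderUnitSpace.diam_le_diam_add_two_mul_hausdorffDistWith hL).2⟩

/-- **The diameter is Lipschitz for quantum Gromov–Hausdorff distance:**
`|diam(A, L_A) − diam(B, L_B)| ≤ 2 · dist_q(A, B)`, stated in `ℝ≥0∞` as the pair of
inequalities `diam(A) ≤ diam(B) + 2 dist_q(A,B)` and `diam(B) ≤ diam(A) + 2 dist_q(A,B)`. -/
theorem abs_diam_sub_diam_le_two_distq (A B : OrderUnitSpace)
    (LA : Seminorm ℝ A.carrier) (LB : Seminorm ℝ B.carrier)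
    (hLA : A.IsLipNorm LA) (hLB : B.IsLipNorm LB) :
    A.diam LA ≤ B.diam LB + 2 * A.distq B LA LB ∧
      B.diam LB ≤ A.diam LA + 2 * A.distq B LA LB :=
  abs_diam_sub_diam_le_two_distq_general A B LA LB
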